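/- arXiv:2302.03791 — 6 statements merged into one kernel-verified Lean document; each statement's English description precedes it below -/
import Mathlib

section
/- Let F_1, ..., F_m, F_{m+1} be m+1 i.i.d. random vectors in ℝ^d defined on a common probability space, such that for each coordinate j ∈ {1,...,d} the common marginal distribution of the j-th coordinate is atomless (so the m+1 values in coordinate j are almost surely pairwise distinct). Fix a miscoverage level α ∈ [0,1] and assume ⌊(m+1)α/2⌋ ≥ 1 and ⌈(m+1)(1-α/2)⌉ ≤ m. For each j let l̂_{j,α} be the ⌊(m+1)α/2⌋-th smallest value and û_{j,α} the ⌈(m+1)(1-α/2)⌉-th smallest value among (F_1)_j, ..., (F_m)_j. Then for every j ∈ {1,...,d}, P[ l̂_{j,α} ≤ (F_{m+1})_j ≤ û_{j,α} ] ≥ 1 - α. -/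
/-!
Fix a coordinate `j`. The values `(F i)_j` are i.i.d. with an atomless law, so almost surely they
are pairwise distinct, and by exchangeability the rank of the test value `(F_{m+1})_j` among all
`m + 1` values is uniform on `{0, …, m}`. On the event of distinct values,
`l̂ ≤ (F_{m+1})_j ≤ û` says exactly that this rank lies in `[⌊(m+1)α/2⌋, ⌈(m+1)(1-α/2)⌉)`,
an event of probability `(⌈(m+1)(1-α/2)⌉ - ⌊(m+1)α/2⌋) / (m+1) ≥ 1 - α`.
-/

open MeasureTheory

/-- The `k`-th smallest value (1-indexed) among the values of `g : Fin m → ℝ`,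
with junk value `0` when `k - 1` is out of range. -/
noncomputable def kthSmallest {m : ℕ} (g : Fin m → ℝ) (k : ℕ) : ℝ :=
  if h : k - 1 < m then g (Tuple.sort g ⟨k - 1, h⟩) else 0

open ProbabilityTheory Finset
open scoped ENNReal

lemma ProbabilityTheory.IndepFun.ae_ne {Ω β : Type*} [MeasurableSpace Ω] [MeasurableSpace β]
    [MeasurableEq β] {P : Measure Ω} [IsFiniteMeasure P] {X Y : Ω → β}
    (hXY : IndepFun X Y P) (hX : Measurable X) (hY : Measurable Y)
    [NullSingletonClass (P.map X)] : ∀ᵐ ω ∂P, X ω ≠ Y ω := by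
  have hdiag : MeasurableSet {p : β × β | p.1 = p.2} := measurableSet_diagonal
  simp only [ae_iff, not_not]
  change P ((fun ω => (X ω, Y ω)) ⁻¹' {p | p.1 = p.2}) = 0
  rw [← Measure.map_apply (hX.prodMk hY) hdiag,
    (indepFun_iff_map_prod_eq_prod_map_map hX.aemeasurable hY.aemeasurable).mp hXY,
    Measure.prod_apply_symm hdiag]
  simp

lemma ProbabilityTheory.iIndepFun.measurePreserving_pi {Ω ι β : Type*} [MeasurableSpace Ω]
    [MeasurableSpace β] [Fintype ι] {P : Measure Ω} [IsProbabilityMeasure P] {X : ι → Ω → β}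
    (hX : iIndepFun X P) (hXm : ∀ i, Measurable (X i)) {ν : Measure β}
    (hlaw : ∀ i, P.map (X i) = ν) :
    MeasurePreserving (fun ω i => X i ω) P (Measure.pi fun _ : ι => ν) where
  measurable := measurable_pi_lambda _ hXm
  map_eq := by simp_rw [hX.map_fun_eq_pi_map fun i => (hXm i).aemeasurable, hlaw]

namespace Tuple

variable {ι α : Type*} [Fintype ι] [LinearOrder α]

def rank (x : ι → α) (i : ι) : ℕ := #{k | x k < x i}

lemma rank_lt_card (x : ι → α) (i : ι) : rank x i < Fintype.card ι :=
  card_lt_card <| filter_ssubset.mpr ⟨i, mem_univ i, lt_irrefl _⟩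

lemma rank_lt_rank {x : ι → α} {i j : ι} (h : x i < x j) : rank x i < rank x j :=
  card_lt_card <| (ssubset_iff_of_subset <| monotone_filter_right _ fun _ _ hk => hk.trans h).mpr
    ⟨i, by simpa using h, by simp⟩

lemma rank_injective {x : ι → α} (hx : Function.Injective x) : Function.Injective (rank x) := by
  intro i j hij
  by_contra hne
  rcases (hx.ne hne).lt_or_gt with h | h
  · exact (rank_lt_rank h).ne hij
  · exact (rank_lt_rank h).ne' hij

lemma exists_rank_eq {x : ι → α} (hx : Function.Injective x) {r : ℕ}
    (hr : r < Fintype.card ι) : ∃ i, rank x i = r := by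
  let f : ι → Fin (Fintype.card ι) := fun i => ⟨rank x i, rank_lt_card x i⟩
  have hf : Function.Injective f := fun i j h => rank_injective hx (congrArg Fin.val h)
  obtain ⟨i, hi⟩ := ((Fintype.bijective_iff_injective_and_card f).mpr ⟨hf, by simp⟩).2 ⟨r, hr⟩
  exact ⟨i, congrArg Fin.val hi⟩

lemma rank_comp_equiv (x : ι → α) (σ : ι ≃ ι) (i : ι) : rank (x ∘ σ) i = rank x (σ i) :=
  card_equiv σ fun k => by simp

lemma rank_last {m : ℕ} (x : Fin (m + 1) → α) :
    rank x (Fin.last m) = #{i : Fin m | x i.castSucc < x (Fin.last m)} := by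
  simp only [rank, card_filter, Fin.sum_univ_castSucc, lt_irrefl, if_false, add_zero]

variable [TopologicalSpace α] [OrderClosedTopology α] [SecondCountableTopology α]
  [MeasurableSpace α] [OpensMeasurableSpace α]

lemma measurable_rank (i : ι) : Measurable fun x : ι → α => rank x i := by
  simp only [rank, card_filter]
  exact Finset.measurable_sum _ fun k _ =>
    Measurable.ite (measurableSet_lt (measurable_pi_apply k) (measurable_pi_apply i))
      measurable_const measurable_const

variable (ν : Measure α) [IsProbabilityMeasure ν]

lemma ae_injective_pi [NullSingletonClass ν] :
    ∀ᵐ x ∂Measure.pi (fun _ : ι => ν), Function.Injective x := by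
  have hcoord : iIndepFun (fun i (x : ι → α) => x i) (Measure.pi fun _ => ν) :=
    iIndepFun_pi (X := fun _ => id) fun _ => aemeasurable_id
  simp only [Function.Injective, ae_all_iff]
  intro i j
  by_cases hij : i = j
  · exact Filter.Eventually.of_forall fun _ _ => hij
  · have : NullSingletonClass ((Measure.pi fun _ : ι => ν).map fun x => x i) := by
      rw [(measurePreserving_eval _ i).map_eq]; infer_instance
    filter_upwards [(hcoord.indepFun hij).ae_ne (measurable_pi_apply i) (measurable_pi_apply j)]
      with x hne heq using absurd heq hne

lemma pi_rank_eq_eq_pi_rank_eq (i j : ι) (r : ℕ) :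
    Measure.pi (fun _ : ι => ν) {x | rank x i = r} =
      Measure.pi (fun _ : ι => ν) {x | rank x j = r} := by
  classical
  have hswap := measurePreserving_arrowCongr' (fun _ : ι => ν) (fun _ => ν) (Equiv.swap i j)
    (MeasurableEquiv.refl α) fun _ => MeasurePreserving.id ν
  have hmeas : MeasurableSet {x : ι → α | rank x j = r} :=
    measurable_rank j (measurableSet_singleton r)
  rw [← hswap.measure_preimage hmeas.nullMeasurableSet]
  congr 1
  ext x
  change rank x i = r ↔ rank (x ∘ Equiv.swap i j) j = r
  rw [rank_comp_equiv, Equiv.swap_apply_right]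

lemma pi_rank_eq (i : ι) {r : ℕ} (hr : r < Fintype.card ι) [NullSingletonClass ν] :
    Measure.pi (fun _ : ι => ν) {x | rank x i = r} = (Fintype.card ι : ENNReal)⁻¹ := by
  set π := Measure.pi fun _ : ι => ν
  -- Up to a null set the events `{rank x j = r}`, `j : ι`, partition the space, and by
  -- exchangeability they all have the same measure.
  have hnull : π {x | ¬Function.Injective x} = 0 := ae_iff.mp (ae_injective_pi ν)
  have hmeas : ∀ j, MeasurableSet {x : ι → α | rank x j = r} := fun j =>
    measurable_rank j (measurableSet_singleton r)
  have hdisj : Pairwise (Function.onFun (AEDisjoint π) fun j => {x | rank x j = r}) :=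
    fun j k hjk => measure_mono_null
      (fun x hx hinj => hjk (rank_injective hinj (hx.1.trans hx.2.symm))) hnull
  have hcover : π (⋃ j, {x | rank x j = r}) = 1 := by
    rw [← prob_compl_eq_zero_iff (MeasurableSet.iUnion hmeas)]
    refine measure_mono_null (t := {x | ¬Function.Injective x}) (fun x hx hinj => hx ?_) hnull
    simpa using exists_rank_eq hinj hr
  have hsum : ∑ j : ι, π {x | rank x j = r} = 1 := by
    rw [← hcover, measure_iUnion₀ hdisj fun j => (hmeas j).nullMeasurableSet, tsum_fintype]
  rw [Finset.sum_congr rfl fun j _ => pi_rank_eq_eq_pi_rank_eq ν j i r, Finset.sum_const,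
    Finset.card_univ, nsmul_eq_mul] at hsum
  exact ENNReal.eq_inv_of_mul_eq_one_left (by rwa [mul_comm])

lemma pi_rank_mem_finset (i : ι) {s : Finset ℕ} (hs : ∀ r ∈ s, r < Fintype.card ι)
    [NullSingletonClass ν] :
    Measure.pi (fun _ : ι => ν) {x | rank x i ∈ s} = #s / Fintype.card ι := by
  have hunion : {x : ι → α | rank x i ∈ s} = ⋃ r ∈ s, {x | rank x i = r} := by ext; simp
  have hmeas : ∀ r, MeasurableSet {x : ι → α | rank x i = r} := fun r =>
    measurable_rank i (measurableSet_singleton r)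
  rw [hunion, measure_biUnion_finset (fun r _ r' _ hne => Set.disjoint_left.mpr fun x hr hr' =>
      hne (hr.symm.trans hr')) fun r _ => hmeas r,
    Finset.sum_congr rfl fun r hr => pi_rank_eq ν i (hs r hr), Finset.sum_const, nsmul_eq_mul,
    div_eq_mul_inv]

end Tuple

lemma kthSmallest_mem_iff_of_isLowerSet {m k : ℕ} (hk1 : 1 ≤ k) (hkm : k ≤ m) (g : Fin m → ℝ)
    {s : Set ℝ} [DecidablePred (· ∈ s)] (hs : IsLowerSet s) :
    kthSmallest g k ∈ s ↔ k ≤ #{i | g i ∈ s} := by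
  have hk : k - 1 < m := by omega
  set σ := Tuple.sort g
  have hsorted : Monotone (g ∘ σ) := Tuple.monotone_sort g
  have hcard : #{i | g i ∈ s} = #{p | g (σ p) ∈ s} := card_equiv σ.symm fun i => by simp
  rw [kthSmallest, dif_pos hk, hcard]
  constructor
  · intro hmem
    calc k = #(Iic (⟨k - 1, hk⟩ : Fin m)) := by rw [Fin.card_Iic, Fin.val_mk]; omega
      _ ≤ _ := card_le_card fun p hp => by
            simpa using hs (hsorted (mem_Iic.mp hp)) hmem
  · intro hle
    by_contra hnot
    have hsub : ({p | g (σ p) ∈ s} : Finset (Fin m)) ⊆ Iio ⟨k - 1, hk⟩ := fun p hp => by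
      simp only [mem_filter, mem_univ, true_and] at hp
      exact mem_Iio.mpr (lt_of_not_ge fun hge => hnot (hs (hsorted hge) hp))
    have := card_le_card hsub
    rw [Fin.card_Iio, Fin.val_mk] at this
    omega

lemma kthSmallest_le_iff {m k : ℕ} (hk1 : 1 ≤ k) (hkm : k ≤ m) (g : Fin m → ℝ) (t : ℝ) :
    kthSmallest g k ≤ t ↔ k ≤ #{i | g i ≤ t} :=
  kthSmallest_mem_iff_of_isLowerSet hk1 hkm g (s := Set.Iic t) (isLowerSet_Iic t)

lemma le_kthSmallest_iff {m k : ℕ} (hk1 : 1 ≤ k) (hkm : k ≤ m) (g : Fin m → ℝ) (t : ℝ) :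
    t ≤ kthSmallest g k ↔ #{i | g i < t} < k := by
  simpa using (kthSmallest_mem_iff_of_isLowerSet hk1 hkm g (s := Set.Iio t) (isLowerSet_Iio t)).not

lemma kthSmallest_le_and_le_kthSmallest_iff_rank_mem_Ico {m kl ku : ℕ} (hkl : 1 ≤ kl)
    (hklu : kl ≤ ku) (hku : ku ≤ m) {x : Fin (m + 1) → ℝ} (hx : Function.Injective x) :
    (kthSmallest (fun i : Fin m => x i.castSucc) kl ≤ x (Fin.last m) ∧
      x (Fin.last m) ≤ kthSmallest (fun i : Fin m => x i.castSucc) ku) ↔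
      Tuple.rank x (Fin.last m) ∈ Ico kl ku := by
  have hle_iff_lt : ∀ i : Fin m, x i.castSucc ≤ x (Fin.last m) ↔ x i.castSucc < x (Fin.last m) :=
    fun i => (hx.ne (Fin.castSucc_lt_last i).ne).le_iff_lt
  rw [kthSmallest_le_iff hkl (hklu.trans hku), le_kthSmallest_iff (hkl.trans hklu) hku,
    Tuple.rank_last, mem_Ico, filter_congr fun i _ => hle_iff_lt i]

lemma floor_mul_half_le_ceil_mul_one_sub_half {c α : ℝ} (hc : 0 ≤ c) (hα : α ≤ 1) :
    ⌊c * α / 2⌋₊ ≤ ⌈c * (1 - α / 2)⌉₊ :=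
  (Nat.floor_le_floor (by nlinarith)).trans (Nat.floor_le_ceil _)

lemma one_sub_le_ceil_sub_floor_div {c α : ℝ} (hc : 0 < c) (hα0 : 0 ≤ α) (hα1 : α ≤ 1) :
    1 - α ≤ ((⌈c * (1 - α / 2)⌉₊ - ⌊c * α / 2⌋₊ : ℕ) : ℝ) / c := by
  rw [Nat.cast_sub (floor_mul_half_le_ceil_mul_one_sub_half hc.le hα1), le_div_iff₀ hc]
  have hfloor : (⌊c * α / 2⌋₊ : ℝ) ≤ c * α / 2 := Nat.floor_le (by positivity)
  have hceil : c * (1 - α / 2) ≤ ⌈c * (1 - α / 2)⌉₊ := Nat.le_ceil _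
  linarith

lemma measure_kthSmallest_le_and_le_kthSmallest {Ω : Type*} [MeasurableSpace Ω] {P : Measure Ω}
    [IsProbabilityMeasure P] {m kl ku : ℕ} (hkl : 1 ≤ kl) (hklu : kl ≤ ku) (hku : ku ≤ m)
    {X : Fin (m + 1) → Ω → ℝ} (hXm : ∀ i, Measurable (X i)) (hX : iIndepFun X P)
    {ν : Measure ℝ} [NullSingletonClass ν] (hlaw : ∀ i, P.map (X i) = ν) :
    P {ω | kthSmallest (fun i : Fin m => X i.castSucc ω) kl ≤ X (Fin.last m) ω ∧
        X (Fin.last m) ω ≤ kthSmallest (fun i : Fin m => X i.castSucc ω) ku} =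
      ((ku - kl : ℕ) : ℝ≥0∞) / (m + 1) := by
  have : IsProbabilityMeasure ν := hlaw 0 ▸ Measure.isProbabilityMeasure_map (hXm 0).aemeasurable
  set π := Measure.pi fun _ : Fin (m + 1) => ν
  set S := {x : Fin (m + 1) → ℝ | kthSmallest (fun i : Fin m => x i.castSucc) kl ≤ x (Fin.last m) ∧
    x (Fin.last m) ≤ kthSmallest (fun i : Fin m => x i.castSucc) ku}
  have hevent : S =ᵐ[π] {x | Tuple.rank x (Fin.last m) ∈ Ico kl ku} := by
    filter_upwards [Tuple.ae_injective_pi ν] with x hx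
    exact propext (kthSmallest_le_and_le_kthSmallest_iff_rank_mem_Ico hkl hklu hku hx)
  have hS : NullMeasurableSet S π :=
    ((Tuple.measurable_rank _ (Set.to_countable _).measurableSet).nullMeasurableSet).congr
      hevent.symm
  calc P ((fun ω i => X i ω) ⁻¹' S) = π S := (hX.measurePreserving_pi hXm hlaw).measure_preimage hS
    _ = π {x | Tuple.rank x (Fin.last m) ∈ Ico kl ku} := measure_congr hevent
    _ = ((ku - kl : ℕ) : ℝ≥0∞) / (m + 1) := by
      rw [Tuple.pi_rank_mem_finset ν _ fun r hr => by
        simp only [mem_Ico, Fintype.card_fin] at hr ⊢; omega]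
      simp

/-- **Calibrated quantiles guarantee entrywise coverage.**
Let `F 0, …, F m` be `m + 1` i.i.d. random vectors in `ℝ^d` whose common
coordinate marginals are atomless. For a miscoverage level `α ∈ [0, 1]` with
`1 ≤ ⌊(m+1)α/2⌋` and `⌈(m+1)(1-α/2)⌉ ≤ m`, the entrywise calibrated empirical
quantiles `l̂_{j,α}` (the `⌊(m+1)α/2⌋`-th smallest value) and `û_{j,α}`
(the `⌈(m+1)(1-α/2)⌉`-th smallest value) of the first `m` samples satisfy, for
every coordinate `j`, `P[l̂_{j,α} ≤ (F_{m+1})_j ≤ û_{j,α}] ≥ 1 - α`. -/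
theorem entrywise_coverage_of_calibrated_quantiles
    {Ω : Type*} [MeasurableSpace Ω] (P : Measure Ω) [IsProbabilityMeasure P]
    (m d : ℕ)
    (F : Fin (m + 1) → Ω → (Fin d → ℝ))
    (hFmeas : ∀ i, Measurable (F i))
    (hindep : ProbabilityTheory.iIndepFun F P)
    (μ : Measure (Fin d → ℝ))
    (hid : ∀ i, Measure.map (F i) P = μ)
    (hatomless : ∀ (j : Fin d) (r : ℝ), μ.map (fun x => x j) {r} = 0)
    (α : ℝ) (hα0 : 0 ≤ α) (hα1 : α ≤ 1)
    (hkl : 1 ≤ ⌊((m : ℝ) + 1) * α / 2⌋₊)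
    (hku : ⌈((m : ℝ) + 1) * (1 - α / 2)⌉₊ ≤ m) :
    ∀ j : Fin d,
      ENNReal.ofReal (1 - α) ≤
        P {ω |
          kthSmallest (fun i : Fin m => F i.castSucc ω j) ⌊((m : ℝ) + 1) * α / 2⌋₊
              ≤ F (Fin.last m) ω j ∧
          F (Fin.last m) ω j
              ≤ kthSmallest (fun i : Fin m => F i.castSucc ω j)
                  ⌈((m : ℝ) + 1) * (1 - α / 2)⌉₊} := by
  intro j
  set kl := ⌊((m : ℝ) + 1) * α / 2⌋₊
  set ku := ⌈((m : ℝ) + 1) * (1 - α / 2)⌉₊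
  have hm : (0 : ℝ) < m + 1 := by positivity
  have : NullSingletonClass (μ.map fun x => x j) := ⟨hatomless j⟩
  have hcoverage := measure_kthSmallest_le_and_le_kthSmallest hkl
    (floor_mul_half_le_ceil_mul_one_sub_half hm.le hα1) hku
    (fun i => (measurable_pi_apply j).comp (hFmeas i))
    (hindep.comp _ fun _ => measurable_pi_apply j)
    fun i => by rw [← Measure.map_map (measurable_pi_apply j) (hFmeas i), hid i]
  calc ENNReal.ofReal (1 - α)
      ≤ ENNReal.ofReal ((ku - kl : ℕ) / ((m : ℝ) + 1)) :=
        ENNReal.ofReal_le_ofReal (one_sub_le_ceil_sub_floor_div hm hα0 hα1)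
    _ = ((ku - kl : ℕ) : ℝ≥0∞) / (m + 1) := by
      rw [ENNReal.ofReal_div_of_pos hm]
      simp [ENNReal.ofReal_add]
    _ = P _ := hcoverage.symm
end

section
/- Let (Ω, ℱ, P) be a probability space, ε ≥ 0 and δ ∈ [0,1]. Let R : ℝ → ℝ be monotonically nonincreasing and continuous, and assume the set {λ ∈ ℝ : R(λ) ≤ ε} is nonempty and bounded below, with infimum λ*. Let Û : Ω × ℝ → ℝ be such that for each fixed λ ∈ ℝ the event {ω : R(λ) ≤ Û(ω, λ)} is measurable with probability at least 1 - δ (a pointwise upper confidence bound at level δ). Suppose that for every ω the set S(ω) = {λ ∈ ℝ : Û(ω, λ') < ε for all λ' ≥ λ} is nonempty and bounded below, define λ̂(ω) = inf S(ω), and assume the event {ω : R(λ̂(ω)) ≤ ε} is measurable. Then P[ R(λ̂) ≤ ε ] ≥ 1 - δ. -/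
open MeasureTheory

/-- **Validity of the RCPS calibration procedure.**
Let `R : ℝ → ℝ` be a monotonically nonincreasing, continuous risk function such
that `{λ : R λ ≤ ε}` is nonempty and bounded below, and let `U ω ·` be a
pointwise upper confidence bound at level `δ`, i.e. for each fixed `λ`,
`P[R λ ≤ U ω λ] ≥ 1 - δ`. If `λ̂(ω) = inf {λ : U ω λ' < ε for all λ' ≥ λ}`
(the RCPS choice, where each such set is nonempty and bounded below), then
`P[R λ̂ ≤ ε] ≥ 1 - δ`. -/
theorem rcps_risk_control
    {Ω : Type*} [MeasurableSpace Ω] (P : Measure Ω) [IsProbabilityMeasure P]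
    (ε : ℝ) (hε : 0 ≤ ε) (δ : ℝ) (hδ0 : 0 ≤ δ) (hδ1 : δ ≤ 1)
    (R : ℝ → ℝ) (hRanti : Antitone R) (hRcont : Continuous R)
    (hRne : {l : ℝ | R l ≤ ε}.Nonempty) (hRbdd : BddBelow {l : ℝ | R l ≤ ε})
    (lstar : ℝ) (hlstar : lstar = sInf {l : ℝ | R l ≤ ε})
    (U : Ω → ℝ → ℝ)
    (hUmeas : ∀ l : ℝ, MeasurableSet {ω | R l ≤ U ω l})
    (hU : ∀ l : ℝ, ENNReal.ofReal (1 - δ) ≤ P {ω | R l ≤ U ω l})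
    (S : Ω → Set ℝ)
    (hS : ∀ ω, S ω = {l : ℝ | ∀ l' ≥ l, U ω l' < ε})
    (hSne : ∀ ω, (S ω).Nonempty) (hSbdd : ∀ ω, BddBelow (S ω))
    (lhat : Ω → ℝ) (hlhat : ∀ ω, lhat ω = sInf (S ω))
    (hmeas : MeasurableSet {ω | R (lhat ω) ≤ ε}) :
    ENNReal.ofReal (1 - δ) ≤ P {ω | R (lhat ω) ≤ ε} := by
  -- λ* attains the set: {R ≤ ε} is closed, nonempty, bounded below
  have hclosed : IsClosed {l : ℝ | R l ≤ ε} := isClosed_le hRcont continuous_const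
  have hlstar_mem : R lstar ≤ ε := by
    rw [hlstar]; exact hclosed.csInf_mem hRne hRbdd
  -- Key inclusion: on event {R λ* ≤ U ω λ*}, R(λ̂ ω) ≤ ε
  have hsub : {ω | R lstar ≤ U ω lstar} ⊆ {ω | R (lhat ω) ≤ ε} := by
    intro ω hω
    simp only [Set.mem_setOf_eq] at hω ⊢
    -- claim: λ* ≤ λ̂ ω
    have hge : lstar ≤ lhat ω := by
      by_contra hlt
      push_neg at hlt
      -- then ∃ l ∈ S ω with l < lstar
      rw [hlhat ω] at hlt
      obtain ⟨l, hlS, hllt⟩ := exists_lt_of_csInf_lt (hSne ω) hlt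
      rw [hS ω] at hlS
      have hUlt : U ω lstar < ε := hlS lstar (le_of_lt hllt)
      have hRlt : R lstar < ε := lt_of_le_of_lt hω hUlt
      -- continuity: R < ε slightly below lstar, contradicting inf
      have : ∀ᶠ x in nhds lstar, R x < ε :=
        (hRcont.continuousAt).eventually_lt continuousAt_const hRlt
      obtain ⟨η, hη, hball⟩ := Metric.eventually_nhds_iff.mp this
      have hmem : lstar - η / 2 ∈ {l : ℝ | R l ≤ ε} := by
        have : dist (lstar - η / 2) lstar < η := by
          rw [Real.dist_eq]; rw [abs_of_nonpos (by linarith)]; linarith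
        exact le_of_lt (hball this)
      have := csInf_le hRbdd hmem
      rw [← hlstar] at this
      linarith
    exact le_trans (hRanti hge) hlstar_mem
  calc ENNReal.ofReal (1 - δ) ≤ P {ω | R lstar ≤ U ω lstar} := hU lstar
    _ ≤ P {ω | R (lhat ω) ≤ ε} := measure_mono hsub
end

section
/- Let (X, Y) be a random pair with values in ℝ^d × 𝒴 (𝒴 a measurable space), let l̂, û : 𝒴 → ℝ^d be measurable with l̂_j(y) < û_j(y) for all j and y, and let ℓ : ℝ^d × ℝ^d × ℝ^d → ℝ be entrywise monotonically nonincreasing, with ℓ(X, l̂(Y) - λ, û(Y) + λ) integrable for every λ ∈ ℝ^d; define the risk R(λ) = E[ℓ(X, l̂(Y) - λ, û(Y) + λ)]. Let (Ω, P) be a probability space modeling the calibration randomness, δ ∈ [0,1], ε ≥ 0, and let Û : Ω × ℝ^d → ℝ satisfy, for each fixed λ ∈ ℝ^d, that the event {ω : R(λ) ≤ Û(ω, λ)} is measurable with probability at least 1 - δ. Fix λ̃ ∈ ℝ^d and η ∈ ℝ^d with η ≥ 0 coordinatewise and Σ_j η_j > 0, and let Λ̃ = {λ̃ + ωη : ω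 ∈ ℝ}. Assume t ↦ R(λ̃ + tη) is continuous and that {t ∈ ℝ : R(λ̃ + tη) ≤ ε} is nonempty and bounded below. For each ω ∈ Ω let F(ω) = {λ ∈ Λ̃ : Û(ω, λ + βη) < ε for all β ≥ 0}, assume F(ω) is nonempty and that λ̂(ω) = argmin_{λ ∈ F(ω)} Σ_{j=1}^d λ_j exists, and assume the event {ω : R(λ̂(ω)) ≤ ε} is measurable. Then: (i) P[ R(λ̂) ≤ ε ] ≥ 1 - δ, i.e., the intervals indexed by λ̂ form an (ε, δ)-Risk-Controlling Prediction Set; and (ii) for every ω, every λ ∈ F(ω), and every u, l ∈ ℝ^d, the mean interval length satisfies (1/d) Σ_j (u_j - l_j + 2 λ̂_j(ω)) ≤ (1/d) Σ_j (u_j - l_j + 2 λ_j), i.e., λ̂(ω) minimizes the mean interval length over the feasible set in Λ̃. -/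
open MeasureTheory

/-- **Optimal mean interval length risk control (validity of multidimensional RCPS).**
For an entrywise monotonically nonincreasing loss `ℓ` with risk
`R(λ) = E[ℓ(X, l̂(Y) - λ, û(Y) + λ)]`, a pointwise level-`δ` upper confidence
bound `U`, a line `Λ̃ = {λ̃ + t • η : t ∈ ℝ}` with `η ≥ 0`, `Σ_j η_j > 0`, and
`λ̂(ω) = argmin_{λ ∈ F(ω)} Σ_j λ_j` over the feasible set
`F(ω) = {λ ∈ Λ̃ : U ω (λ + β • η) < ε for all β ≥ 0}`, we have
(i) `P[R λ̂ ≤ ε] ≥ 1 - δ`, i.e. `I_λ̂` is an `(ε, δ)`-RCPS, and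
(ii) `λ̂(ω)` minimizes the mean interval length
`Ī(λ) = (1/d) Σ_j (u_j - l_j + 2 λ_j)` over the feasible set in `Λ̃`. -/
theorem k_rcps_optimal_mean_interval_length_risk_control
    {Ω 𝓨 : Type*} [MeasurableSpace Ω] [MeasurableSpace 𝓨]
    (P : Measure Ω) [IsProbabilityMeasure P] (d : ℕ)
    (X : Ω → Fin d → ℝ) (Y : Ω → 𝓨)
    (hX : Measurable X) (hY : Measurable Y)
    (lhat uhat : 𝓨 → Fin d → ℝ)
    (hlhat : Measurable lhat) (huhat : Measurable uhat)
    (hlu : ∀ y j, lhat y j < uhat y j)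
    (ℓ : (Fin d → ℝ) → (Fin d → ℝ) → (Fin d → ℝ) → ℝ)
    (hℓ : ∀ (x a a' b b' : Fin d → ℝ),
      (∀ j, a' j ≤ a j) → (∀ j, b j ≤ b' j) → ℓ x a' b' ≤ ℓ x a b)
    (hint : ∀ lam : Fin d → ℝ,
      Integrable (fun ω => ℓ (X ω) (lhat (Y ω) - lam) (uhat (Y ω) + lam)) P)
    (R : (Fin d → ℝ) → ℝ)
    (hR : ∀ lam, R lam = ∫ ω, ℓ (X ω) (lhat (Y ω) - lam) (uhat (Y ω) + lam) ∂P)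
    (δ : ℝ) (hδ0 : 0 ≤ δ) (hδ1 : δ ≤ 1) (ε : ℝ) (hε : 0 ≤ ε)
    (U : Ω → (Fin d → ℝ) → ℝ)
    (hUmeas : ∀ lam : Fin d → ℝ, MeasurableSet {ω | R lam ≤ U ω lam})
    (hU : ∀ lam : Fin d → ℝ, ENNReal.ofReal (1 - δ) ≤ P {ω | R lam ≤ U ω lam})
    (ltilde η : Fin d → ℝ) (hη : ∀ j, 0 ≤ η j) (hηpos : 0 < ∑ j, η j)
    (Λt : Set (Fin d → ℝ)) (hΛt : Λt = Set.range (fun t : ℝ => ltilde + t • η))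
    (hcont : Continuous (fun t : ℝ => R (ltilde + t • η)))
    (hne : {t : ℝ | R (ltilde + t • η) ≤ ε}.Nonempty)
    (hbdd : BddBelow {t : ℝ | R (ltilde + t • η) ≤ ε})
    (F : Ω → Set (Fin d → ℝ))
    (hF : ∀ ω, F ω = {lam ∈ Λt | ∀ β : ℝ, 0 ≤ β → U ω (lam + β • η) < ε})
    (hFne : ∀ ω, (F ω).Nonempty)
    (lamhat : Ω → Fin d → ℝ)
    (hlamhat_mem : ∀ ω, lamhat ω ∈ F ω)
    (hlamhat_min : ∀ ω, ∀ lam ∈ F ω, ∑ j, lamhat ω j ≤ ∑ j, lam j)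
    (hmeas : MeasurableSet {ω | R (lamhat ω) ≤ ε}) :
    ENNReal.ofReal (1 - δ) ≤ P {ω | R (lamhat ω) ≤ ε} ∧
    ∀ ω, ∀ lam ∈ F ω, ∀ u l : Fin d → ℝ,
      (1 / (d : ℝ)) * ∑ j, (u j - l j + 2 * lamhat ω j) ≤
        (1 / (d : ℝ)) * ∑ j, (u j - l j + 2 * lam j) := by
  have hgmono : ∀ s t : ℝ, s ≤ t → R (ltilde + t • η) ≤ R (ltilde + s • η) := by
    intro s t hst
    rw [hR, hR]
    refine integral_mono (hint _) (hint _) (fun ω => ?_)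
    refine hℓ _ _ _ _ _ (fun j => ?_) (fun j => ?_) <;>
      · simp only [Pi.sub_apply, Pi.add_apply, Pi.smul_apply, smul_eq_mul]
        nlinarith [mul_le_mul_of_nonneg_right hst (hη j)]
  constructor
  · set S := {t : ℝ | R (ltilde + t • η) ≤ ε} with hS
    have hSclosed : IsClosed S := isClosed_le hcont continuous_const
    set tstar := sInf S with htstar
    have htmem : tstar ∈ S := hSclosed.csInf_mem hne hbdd
    set lamstar := ltilde + tstar • η with hls
    refine le_trans (hU lamstar) (measure_mono ?_)
    intro ω hω
    obtain ⟨s, hs⟩ : ∃ s, lamhat ω = ltilde + s • η := by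
      have h := hlamhat_mem ω
      rw [hF, hΛt] at h
      obtain ⟨⟨s, hs⟩, _⟩ := h
      exact ⟨s, hs.symm⟩
    by_cases hcase : tstar ≤ s
    · show R (lamhat ω) ≤ ε
      rw [hs]
      exact le_trans (hgmono tstar s hcase) htmem
    · exfalso
      push_neg at hcase
      have hfeas := hlamhat_mem ω
      rw [hF] at hfeas
      have hUlt : U ω (lamhat ω + (tstar - s) • η) < ε :=
        hfeas.2 _ (by linarith)
      have heq : lamhat ω + (tstar - s) • η = lamstar := by
        rw [hs, hls]; ext j
        simp only [Pi.add_apply, Pi.smul_apply, smul_eq_mul]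
        ring
      rw [heq] at hUlt
      have hRlt : R lamstar < ε := lt_of_le_of_lt hω hUlt
      have hev : ∀ᶠ t in nhds tstar, R (ltilde + t • η) < ε :=
        (hcont.continuousAt (x := tstar)).eventually_lt continuousAt_const hRlt
      obtain ⟨r, hr, h⟩ := Metric.eventually_nhds_iff.mp hev
      have htS : tstar - r / 2 ∈ S := le_of_lt (h (by
        rw [Real.dist_eq]
        have e : tstar - r / 2 - tstar = -(r / 2) := by ring
        rw [e, abs_neg, abs_of_pos (by linarith)]
        linarith))
      have := csInf_le hbdd htS
      linarith
  · intro ω lam hlam u l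
    have h := hlamhat_min ω lam hlam
    have hd : (0:ℝ) ≤ 1 / d := by positivity
    refine mul_le_mul_of_nonneg_left ?_ hd
    have e1 : ∀ v : Fin d → ℝ, ∑ j, (u j - l j + 2 * v j)
        = (∑ j, (u j - l j)) + 2 * ∑ j, v j := by
      intro v
      rw [Finset.sum_add_distrib, Finset.mul_sum]
    rw [e1, e1]
    linarith
end

section
/- Let (X, Y) be a random pair with values in ℝ^d × 𝒴, let l̂, û : 𝒴 → ℝ^d be measurable with l̂_j(y) < û_j(y) for all j and y, and define the 01-risk R^{01}(λ) = E[ (1/d) Σ_{j=1}^d 𝟙[ X_j ∉ [l̂_j(Y) - λ_j, û_j(Y) + λ_j] ] ] for λ ∈ ℝ^d. Let (Ω, P) be a probability space, δ ∈ [0,1], ε ≥ 0, and let Û : Ω × ℝ^d → ℝ satisfy, for each fixed λ ∈ ℝ^d, that the event {ω : R^{01}(λ) ≤ Û(ω, λ)} is measurable with probability at least 1 - δ. Fix any vector v ∈ ℝ^d, let 𝟏 ∈ ℝ^d denote the all-ones vector, assume t ↦ R^{01}(v + t𝟏) is continuous and that {t ∈ ℝ : R^{01}(v + t𝟏) ≤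 ε} is nonempty and bounded below. For each ω suppose the set {β ∈ ℝ : Û(ω, v + β'𝟏) < ε for all β' ≥ β} is nonempty and bounded below, let β̂(ω) be its infimum, set λ̂_K(ω) = v + β̂(ω)𝟏, and assume the event {ω : R^{01}(λ̂_K(ω)) ≤ ε} is measurable. Then P[ R^{01}(λ̂_K) ≤ ε ] ≥ 1 - δ. -/
open MeasureTheory

/-- **Validity of the `K`-RCPS procedure.**
For the interval predictors `I_λ(y)_j = [l̂_j(y) - λ_j, û_j(y) + λ_j]` with
01-risk `R⁰¹(λ) = E[(1/d) Σ_j 𝟙[X_j ∉ I_λ(Y)_j]]`, a pointwise level-`δ` upper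
confidence bound `U`, an offset `v ∈ ℝ^d`, and the all-ones direction `𝟏`, set
`β̂(ω) = inf {β : U ω (v + β' • 𝟏) < ε for all β' ≥ β}` and
`λ̂_K(ω) = v + β̂(ω) • 𝟏`. Then `P[R⁰¹(λ̂_K) ≤ ε] ≥ 1 - δ`. -/
theorem k_rcps_validity_01_risk
    {Ω 𝓨 : Type*} [MeasurableSpace Ω] [MeasurableSpace 𝓨]
    (P : Measure Ω) [IsProbabilityMeasure P] (d : ℕ)
    (X : Ω → Fin d → ℝ) (Y : Ω → 𝓨)
    (hX : Measurable X) (hY : Measurable Y)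
    (lhat uhat : 𝓨 → Fin d → ℝ)
    (hlhat : Measurable lhat) (huhat : Measurable uhat)
    (hlu : ∀ y j, lhat y j < uhat y j)
    (R01 : (Fin d → ℝ) → ℝ)
    (hR01 : ∀ lam : Fin d → ℝ,
      R01 lam = ∫ ω, (1 / (d : ℝ)) * ∑ j,
        (if lhat (Y ω) j - lam j ≤ X ω j ∧ X ω j ≤ uhat (Y ω) j + lam j
          then (0 : ℝ) else 1) ∂P)
    (δ : ℝ) (hδ0 : 0 ≤ δ) (hδ1 : δ ≤ 1) (ε : ℝ) (hε : 0 ≤ ε)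
    (U : Ω → (Fin d → ℝ) → ℝ)
    (hUmeas : ∀ lam : Fin d → ℝ, MeasurableSet {ω | R01 lam ≤ U ω lam})
    (hU : ∀ lam : Fin d → ℝ, ENNReal.ofReal (1 - δ) ≤ P {ω | R01 lam ≤ U ω lam})
    (v : Fin d → ℝ)
    (hcont : Continuous (fun t : ℝ => R01 (v + t • (1 : Fin d → ℝ))))
    (hne : {t : ℝ | R01 (v + t • (1 : Fin d → ℝ)) ≤ ε}.Nonempty)
    (hbdd : BddBelow {t : ℝ | R01 (v + t • (1 : Fin d → ℝ)) ≤ ε})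
    (B : Ω → Set ℝ)
    (hB : ∀ ω, B ω = {β : ℝ | ∀ β' ≥ β, U ω (v + β' • (1 : Fin d → ℝ)) < ε})
    (hBne : ∀ ω, (B ω).Nonempty) (hBbdd : ∀ ω, BddBelow (B ω))
    (betahat : Ω → ℝ) (hbetahat : ∀ ω, betahat ω = sInf (B ω))
    (lamK : Ω → Fin d → ℝ)
    (hlamK : ∀ ω, lamK ω = v + betahat ω • (1 : Fin d → ℝ))
    (hmeas : MeasurableSet {ω | R01 (lamK ω) ≤ ε}) :
    ENNReal.ofReal (1 - δ) ≤ P {ω | R01 (lamK ω) ≤ ε} := by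
  classical
  set f : ℝ → ℝ := fun t => R01 (v + t • (1 : Fin d → ℝ)) with hf
  -- measurability of the integrand
  have key_meas : ∀ lam : Fin d → ℝ, Measurable (fun ω => (1 / (d : ℝ)) * ∑ j,
      (if lhat (Y ω) j - lam j ≤ X ω j ∧ X ω j ≤ uhat (Y ω) j + lam j
        then (0 : ℝ) else 1)) := by
    intro lam
    apply Measurable.const_mul
    apply Finset.measurable_sum
    intro j _
    have h1 : Measurable fun ω => lhat (Y ω) j := ((measurable_pi_apply j).comp hlhat).comp hY
    have h2 : Measurable fun ω => uhat (Y ω) j := ((measurable_pi_apply j).comp huhat).comp hY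
    have h3 : Measurable fun ω => X ω j := (measurable_pi_apply j).comp hX
    have hs : MeasurableSet {ω | lhat (Y ω) j - lam j ≤ X ω j ∧ X ω j ≤ uhat (Y ω) j + lam j} := by
      have ha : MeasurableSet {ω | lhat (Y ω) j - lam j ≤ X ω j} :=
        measurableSet_le (h1.sub measurable_const) h3
      have hb : MeasurableSet {ω | X ω j ≤ uhat (Y ω) j + lam j} :=
        measurableSet_le h3 (h2.add measurable_const)
      simpa [Set.setOf_and] using ha.inter hb
    exact Measurable.ite hs measurable_const measurable_const
  have key_int : ∀ lam : Fin d → ℝ, Integrable (fun ω => (1 / (d : ℝ)) * ∑ j,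
      (if lhat (Y ω) j - lam j ≤ X ω j ∧ X ω j ≤ uhat (Y ω) j + lam j
        then (0 : ℝ) else 1)) P := by
    intro lam
    refine Integrable.mono' (integrable_const (1 : ℝ)) (key_meas lam).aestronglyMeasurable
      (Filter.Eventually.of_forall fun ω => ?_)
    have h0 : (0:ℝ) ≤ ∑ j, (if lhat (Y ω) j - lam j ≤ X ω j ∧ X ω j ≤ uhat (Y ω) j + lam j
        then (0 : ℝ) else 1) := Finset.sum_nonneg fun j _ => by positivity
    have hle : ∑ j, (if lhat (Y ω) j - lam j ≤ X ω j ∧ X ω j ≤ uhat (Y ω) j + lam j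
        then (0 : ℝ) else 1) ≤ ∑ _j : Fin d, (1:ℝ) :=
      Finset.sum_le_sum fun j _ => by split <;> norm_num
    simp only [Finset.sum_const, Finset.card_univ, Fintype.card_fin, nsmul_eq_mul, mul_one] at hle
    rw [Real.norm_eq_abs, abs_of_nonneg (by positivity)]
    rcases Nat.eq_zero_or_pos d with hd | hd
    · simp [hd]
    · calc (1 / (d : ℝ)) * _ ≤ (1 / (d : ℝ)) * d := by
            apply mul_le_mul_of_nonneg_left hle (by positivity)
        _ = 1 := by field_simp
  -- antitonicity along the ray
  have hmono : ∀ s t : ℝ, s ≤ t → f t ≤ f s := by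
    intro s t hst
    simp only [hf]
    rw [hR01, hR01]
    refine integral_mono (key_int _) (key_int _) fun ω => ?_
    refine mul_le_mul_of_nonneg_left (Finset.sum_le_sum fun j _ => ?_) (by positivity)
    simp only [Pi.add_apply, Pi.smul_apply, Pi.one_apply, smul_eq_mul, mul_one]
    by_cases h : lhat (Y ω) j - (v j + s) ≤ X ω j ∧ X ω j ≤ uhat (Y ω) j + (v j + s)
    · have h' : lhat (Y ω) j - (v j + t) ≤ X ω j ∧ X ω j ≤ uhat (Y ω) j + (v j + t) :=
        ⟨le_trans (by linarith) h.1, le_trans h.2 (by linarith)⟩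
      simp [h, h']
    · split <;> simp [h]
  -- the optimal point on the ray
  set S : Set ℝ := {t : ℝ | R01 (v + t • (1 : Fin d → ℝ)) ≤ ε} with hS
  have hSclosed : IsClosed S := isClosed_le hcont continuous_const
  set tstar : ℝ := sInf S with htstar
  have htmem : tstar ∈ S := hSclosed.csInf_mem hne hbdd
  refine le_trans (hU (v + tstar • (1 : Fin d → ℝ))) (measure_mono ?_)
  intro ω hω
  simp only [Set.mem_setOf_eq] at hω ⊢
  by_cases hcase : tstar ≤ betahat ω
  · rw [hlamK]
    exact le_trans (hmono tstar (betahat ω) hcase) htmem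
  · exfalso
    push_neg at hcase
    obtain ⟨β, hβB, hβlt⟩ := exists_lt_of_csInf_lt (hBne ω) (by rw [← hbetahat ω]; exact hcase)
    have hUlt : U ω (v + tstar • (1 : Fin d → ℝ)) < ε := by
      rw [hB ω] at hβB; exact hβB tstar hβlt.le
    have hflt : f tstar < ε := lt_of_le_of_lt hω hUlt
    have hopen : IsOpen {t : ℝ | f t < ε} := isOpen_lt hcont continuous_const
    rcases Metric.isOpen_iff.mp hopen tstar hflt with ⟨r, hr, hball⟩
    have hmem' : tstar - r / 2 ∈ {t : ℝ | f t < ε} := by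
      apply hball
      simp only [Metric.mem_ball, Real.dist_eq]
      rw [abs_of_nonpos (by linarith)]
      linarith
    have hmem2 : f (tstar - r / 2) < ε := hmem'
    have : tstar ≤ tstar - r / 2 := csInf_le hbdd (show tstar - r / 2 ∈ S from le_of_lt hmem2)
    linarith
end

section
/- Fix real numbers x, l̂ < û, and γ ∈ [0,1); set q = γ/(1-γ), c = (l̂ + û)/2, and I(λ) = û - l̂ + 2λ. Then the function f : [0, ∞) → ℝ given by f(λ) = max(0, (2(1+q)/I(λ))·|x - c| - q) is convex on [0, ∞). -/
/-!
Since `1 + q = 1 / (1 - γ) ≥ 0`, the loss is `max 0 (C / (a + b λ) - q)` with `C, b ≥ 0` and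
`a > 0`. The map `λ ↦ (a + b λ)⁻¹` is the convex function `t ↦ t⁻¹` on `(0, ∞)` composed with an
affine map sending `[0, ∞)` into `(0, ∞)`, and nonnegative scaling, subtracting a constant and
taking the maximum with `0` preserve convexity.
-/

open Set

section
variable {𝕜 : Type*} [Field 𝕜] [LinearOrder 𝕜] [IsStrictOrderedRing 𝕜]

theorem convexOn_inv_add_mul {a b : 𝕜} (ha : 0 < a) (hb : 0 ≤ b) :
    ConvexOn 𝕜 (Ici 0) fun t => (a + b * t)⁻¹ := by
  have hcomp := (convexOn_zpow (𝕜 := 𝕜) (-1)).comp_affineMap (AffineMap.lineMap a (a + b))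
  refine (hcomp.subset (fun t (ht : 0 ≤ t) => ?_) (convex_Ici 0)).congr fun t _ => ?_
  · show 0 < AffineMap.lineMap a (a + b) t
    rw [AffineMap.lineMap_apply_ring', add_sub_cancel_left]
    positivity
  · simp [AffineMap.lineMap_apply_ring', add_comm, mul_comm]

theorem convexOn_max_zero_div_add_mul_mul_sub {a b c d : 𝕜} (ha : 0 < a) (hb : 0 ≤ b)
    (hcd : 0 ≤ c * d) (q : 𝕜) :
    ConvexOn 𝕜 (Ici 0) fun t => max 0 (c / (a + b * t) * d - q) := by
  have hdiv := ((convexOn_inv_add_mul ha hb).smul hcd).sub (concaveOn_const q (convex_Ici 0))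
  refine ((convexOn_const 0 (convex_Ici 0)).sup hdiv).congr fun t _ => ?_
  simp only [Pi.sup_apply, Pi.sub_apply, smul_eq_mul]
  congr 2
  ring

theorem one_add_div_one_sub_nonneg {γ : 𝕜} (hγ : γ < 1) : 0 ≤ 1 + γ / (1 - γ) := by
  have h : 0 < 1 - γ := sub_pos.mpr hγ
  rw [one_add_div h.ne', sub_add_cancel]
  positivity

end

theorem surrogate_loss_coord_convexOn_general
    (x lhat uhat γ : ℝ) (hlu : lhat < uhat) (hγ1 : γ < 1) :
    ConvexOn ℝ (Set.Ici (0 : ℝ))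
      (fun lam : ℝ =>
        max 0 ((2 * (1 + γ / (1 - γ))) / (uhat - lhat + 2 * lam) *
          |x - (lhat + uhat) / 2| - γ / (1 - γ))) :=
  convexOn_max_zero_div_add_mul_mul_sub (sub_pos.mpr hlu) zero_le_two
    (mul_nonneg (mul_nonneg zero_le_two (one_add_div_one_sub_nonneg hγ1)) (abs_nonneg _)) _

/-- The per-coordinate surrogate loss
`λ ↦ [ (2(1+q)/I(λ)) |x - c| - q ]₊` with `q = γ/(1-γ)`, `c = (l̂ + û)/2`,
`I(λ) = û - l̂ + 2λ`, is convex on `[0, ∞)` whenever `l̂ < û` and `γ ∈ [0, 1)`. -/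
theorem surrogate_loss_coord_convexOn
    (x lhat uhat γ : ℝ) (hlu : lhat < uhat) (hγ0 : 0 ≤ γ) (hγ1 : γ < 1) :
    ConvexOn ℝ (Set.Ici (0 : ℝ))
      (fun lam : ℝ =>
        max 0 ((2 * (1 + γ / (1 - γ))) / (uhat - lhat + 2 * lam) *
          |x - (lhat + uhat) / 2| - γ / (1 - γ))) :=
  surrogate_loss_coord_convexOn_general x lhat uhat γ hlu hγ1
end

section
/- Fix x ∈ ℝ^d, l̂, û ∈ ℝ^d with l̂_j < û_j for all j, and γ ∈ [0,1); set q = γ/(1-γ), c_j = (l̂_j + û_j)/2, and I(λ)_j = û_j - l̂_j + 2λ_j. Then for every λ ∈ ℝ^d with λ_j ≥ 0 for all j and every j ∈ {1,...,d}, max(0, (2(1+q)/I(λ)_j)·|x_j - c_j| - q) ≥ 𝟙[ x_j ∉ [l̂_j - λ_j, û_j + λ_j] ]; consequently ℓ^γ(x, I_λ) ≥ ℓ^{01}(x, I_λ), i.e., the surrogate loss ℓ^γ is an upper bound to the 01-loss. -/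
/-- The surrogate loss `ℓᵞ` upper bounds the 01-loss `ℓ⁰¹`: with
`q = γ/(1-γ)`, `c_j = (l̂_j + û_j)/2`, `I(λ)_j = û_j - l̂_j + 2λ_j`, for every
`λ ≥ 0` (coordinatewise) and every coordinate `j`,
`[ (2(1+q)/I(λ)_j) |x_j - c_j| - q ]₊ ≥ 𝟙[x_j ∉ [l̂_j - λ_j, û_j + λ_j]]`,
and consequently `ℓᵞ(x, I_λ) ≥ ℓ⁰¹(x, I_λ)`. -/
theorem surrogate_loss_upper_bounds_01_loss
    (d : ℕ) (x lhat uhat : Fin d → ℝ) (γ : ℝ)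
    (hlu : ∀ j, lhat j < uhat j) (hγ0 : 0 ≤ γ) (hγ1 : γ < 1) :
    ∀ lam : Fin d → ℝ, (∀ j, 0 ≤ lam j) →
      (∀ j : Fin d,
        (if lhat j - lam j ≤ x j ∧ x j ≤ uhat j + lam j then (0 : ℝ) else 1) ≤
          max 0 ((2 * (1 + γ / (1 - γ))) / (uhat j - lhat j + 2 * lam j) *
            |x j - (lhat j + uhat j) / 2| - γ / (1 - γ))) ∧
      (1 / (d : ℝ)) * (∑ j,
          (if lhat j - lam j ≤ x j ∧ x j ≤ uhat j + lam j then (0 : ℝ) else 1)) ≤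
        (1 / (d : ℝ)) * ∑ j,
          max 0 ((2 * (1 + γ / (1 - γ))) / (uhat j - lhat j + 2 * lam j) *
            |x j - (lhat j + uhat j) / 2| - γ / (1 - γ)) := by
  intro lam hlam
  have hq0 : 0 ≤ γ / (1 - γ) := div_nonneg hγ0 (by linarith)
  have key : ∀ j : Fin d,
      (if lhat j - lam j ≤ x j ∧ x j ≤ uhat j + lam j then (0 : ℝ) else 1) ≤
        max 0 ((2 * (1 + γ / (1 - γ))) / (uhat j - lhat j + 2 * lam j) *
          |x j - (lhat j + uhat j) / 2| - γ / (1 - γ)) := by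
    intro j
    set q := γ / (1 - γ) with hq
    set I := uhat j - lhat j + 2 * lam j with hI
    have hIpos : 0 < I := by have := hlu j; have := hlam j; simp only [hI]; linarith
    by_cases h : lhat j - lam j ≤ x j ∧ x j ≤ uhat j + lam j
    · simp [h]
    · simp only [h, if_false]
      refine le_max_of_le_right ?_
      have habs : I / 2 < |x j - (lhat j + uhat j) / 2| := by
        rcases not_and_or.mp h with h1 | h1
        · push_neg at h1
          rw [abs_sub_comm]
          calc I / 2 < (lhat j + uhat j) / 2 - x j := by simp only [hI]; linarith
            _ ≤ |(lhat j + uhat j) / 2 - x j| := le_abs_self _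
        · push_neg at h1
          calc I / 2 < x j - (lhat j + uhat j) / 2 := by simp only [hI]; linarith
            _ ≤ |x j - (lhat j + uhat j) / 2| := le_abs_self _
      have hco : 0 < 2 * (1 + q) / I := by positivity
      have : 2 * (1 + q) / I * (I / 2) ≤ 2 * (1 + q) / I * |x j - (lhat j + uhat j) / 2| :=
        mul_le_mul_of_nonneg_left habs.le hco.le
      have heq : 2 * (1 + q) / I * (I / 2) = 1 + q := by
        field_simp
      linarith
  refine ⟨key, mul_le_mul_of_nonneg_left (Finset.sum_le_sum fun j _ => key j) (by positivity)⟩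
end
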